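/- arXiv:2403.06004 — 3 statements merged into one kernel-verified Lean document; each statement's English description precedes it below -/
import Mathlib

section
/- If G is a finite simple connected graph of order n ≥ 3 which contains a cycle, then rvcl(G) ≥ 3. -/
/-!
Relabeling turns a locating rainbow coloring with fewer than three colors into one with two
colors `i` and `j`. The distance from a vertex of color `i` to the class of `j` is then `0` for
all of them (if `j` is unused) or lies in `{1, 2}`, since a rainbow path has at most two
internal vertices; and two vertices of color `i` must differ in this distance. A vertex at
distance `2` has all its neighbors in its own class, so if it has two neighbors, that class
contains three vertices with pairwise distinct distances in `{1, 2}`. Finally, two of three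
consecutive vertices of a cycle share a color, and having two neighbors each, both are at
distance `1` from the other class (or both at `0`).
-/

namespace LocatingRainbow

open SimpleGraph

variable {V : Type*}

/-- The internal vertices of a walk: its support without the endpoints. -/
def internalVertices {G : SimpleGraph V} {u v : V} (p : G.Walk u v) : List V :=
  p.support.tail.dropLast

/-- `c` is a rainbow vertex coloring of `G` (with colors in `Fin k`) if any two distinct
vertices are joined by a path whose internal vertices have pairwise distinct colors. -/
def IsRainbowVertexColoring (G : SimpleGraph V) {k : ℕ} (c : V → Fin k) : Prop :=
  ∀ u v : V, u ≠ v → ∃ p : G.Walk u v, p.IsPath ∧ ((internalVertices p).map c).Nodup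

/-- The distance from a vertex `v` to the color class of the color `i`. -/
noncomputable def distToColor (G : SimpleGraph V) {k : ℕ} (c : V → Fin k) (v : V) (i : Fin k) :
    ℕ :=
  sInf {m | ∃ y, c y = i ∧ G.dist v y = m}

/-- The rainbow code of a vertex `v`: the vector of distances to all color classes. -/
noncomputable def rainbowCode (G : SimpleGraph V) {k : ℕ} (c : V → Fin k) (v : V) :
    Fin k → ℕ :=
  fun i => distToColor G c v i

/-- `c` is a locating rainbow coloring if it is a rainbow vertex coloring and distinct
vertices have distinct rainbow codes. -/
def IsLocatingRainbowColoring (G : SimpleGraph V) {k : ℕ} (c : V → Fin k) : Prop :=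
  IsRainbowVertexColoring G c ∧ Function.Injective (rainbowCode G c)

/-- The rainbow vertex connection number of `G`. -/
noncomputable def rvc (G : SimpleGraph V) : ℕ :=
  sInf {k | ∃ c : V → Fin k, IsRainbowVertexColoring G c}

/-- The locating rainbow connection number of `G`. -/
noncomputable def rvcl (G : SimpleGraph V) : ℕ :=
  sInf {k | ∃ c : V → Fin k, IsLocatingRainbowColoring G c}

end LocatingRainbow

lemma SimpleGraph.Walk.IsCycle.neighborSet_nontrivial {V : Type*} {G : SimpleGraph V}
    {u v : V} {p : G.Walk u u} (hp : p.IsCycle) (hv : v ∈ p.support) : (G.neighborSet v).Nontrivial := by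
  have h : 1 < (p.toSubgraph.neighborSet v).ncard := by
    rw [hp.ncard_neighborSet_toSubgraph_eq_two hv]
    exact one_lt_two
  exact (Set.one_lt_ncard_iff_nontrivial_and_finite.1 h).1.mono
    (p.toSubgraph.neighborSet_subset v)

namespace LocatingRainbow

open SimpleGraph

variable {V : Type*} {G : SimpleGraph V} {k : ℕ} {c : V → Fin k} {u v w y : V} {j : Fin k}

lemma distToColor_le_dist (hy : c y = j) : distToColor G c v j ≤ G.dist v y :=
  Nat.sInf_le ⟨y, hy, rfl⟩

lemma distToColor_self : distToColor G c v (c v) = 0 :=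
  Nat.eq_zero_of_le_zero <| (distToColor_le_dist rfl).trans_eq G.dist_self

lemma distToColor_eq_zero_iff (hG : G.Connected) :
    distToColor G c v j = 0 ↔ c v = j ∨ ∀ y, c y ≠ j := by
  simp [distToColor, Nat.sInf_eq_zero, hG.dist_eq_zero_iff, Set.eq_empty_iff_forall_notMem]

lemma distToColor_pos (hG : G.Connected) (hv : c v ≠ j) (hy : c y = j) :
    0 < distToColor G c v j := by
  by_contra! h
  rcases (distToColor_eq_zero_iff hG).1 (Nat.le_zero.1 h) with h | h
  exacts [hv h, h y hy]

lemma distToColor_le_one_of_adj (hvy : G.Adj v y) (hy : c y = j) : distToColor G c v j ≤ 1 :=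
  (distToColor_le_dist hy).trans (by simpa using G.dist_le hvy.toWalk)

lemma distToColor_le_length_filter (q : G.Walk w y) (hy : c y = j) :
    distToColor G c w j ≤ ((q.support.dropLast.map c).filter (· ≠ j)).length := by
  suffices ∃ z, c z = j ∧ ∃ r : G.Walk w z,
      r.length ≤ ((q.support.dropLast.map c).filter (· ≠ j)).length by
    obtain ⟨z, hz, r, hr⟩ := this
    exact (distToColor_le_dist hz).trans ((G.dist_le r).trans hr)
  induction q with
  | nil => exact ⟨_, hy, .nil, Nat.zero_le _⟩
  | @cons w x y h q ih =>
    by_cases hw : c w = j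
    · exact ⟨w, hw, .nil, Nat.zero_le _⟩
    · obtain ⟨z, hz, r, hr⟩ := ih hy
      refine ⟨z, hz, .cons h r, ?_⟩
      rw [Walk.support_cons, List.dropLast_cons_of_ne_nil q.support_ne_nil, List.map_cons,
        List.filter_cons_of_pos (by simpa using hw), List.length_cons, Walk.length_cons]
      omega

lemma IsRainbowVertexColoring.distToColor_le (hr : IsRainbowVertexColoring G c) (hy : c y = j) :
    distToColor G c v j ≤ k := by
  rcases eq_or_ne v y with rfl | hvy
  · subst hy
    exact distToColor_self.trans_le (Nat.zero_le _)
  obtain ⟨p, -, hnd⟩ := hr v y hvy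
  set l := ((internalVertices p).map c).filter (· ≠ j)
  have hl : l.length + 1 ≤ k := by
    have : (j :: l).Nodup := List.nodup_cons.2 ⟨by simp [l], hnd.filter _⟩
    simpa using this.length_le_card
  have hsupport : p.support.dropLast = v :: internalVertices p := by
    rw [internalVertices, ← p.cons_tail_support, List.dropLast_cons_of_ne_nil,
      List.tail_cons]
    exact List.ne_nil_of_mem (p.end_mem_tail_support_of_ne hvy)
  calc distToColor G c v j ≤ ((p.support.dropLast.map c).filter (· ≠ j)).length :=
        distToColor_le_length_filter p hy
    _ ≤ l.length + 1 := by
        rw [hsupport, List.map_cons, List.filter_cons]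
        split <;> simp [l]
    _ ≤ k := hl

lemma distToColor_comp_of_injective {m : ℕ} {f : Fin k → Fin m} (hf : Function.Injective f)
    (v : V) (i : Fin k) : distToColor G (f ∘ c) v (f i) = distToColor G c v i := by
  simp only [distToColor, Function.comp_apply, hf.eq_iff]

lemma IsLocatingRainbowColoring.comp_injective {m : ℕ} {f : Fin k → Fin m}
    (hc : IsLocatingRainbowColoring G c) (hf : Function.Injective f) :
    IsLocatingRainbowColoring G (f ∘ c) := by
  refine ⟨fun u v huv => ?_, fun u v huv => hc.2 <| funext fun i => ?_⟩
  · obtain ⟨p, hp, hnd⟩ := hc.1 u v huv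
    exact ⟨p, hp, by simpa [List.map_map] using hnd.map hf⟩
  · simpa only [rainbowCode, distToColor_comp_of_injective hf] using congrFun huv (f i)

lemma isLocatingRainbowColoring_of_injective (hG : G.Connected) (hc : Function.Injective c) :
    IsLocatingRainbowColoring G c := by
  classical
  refine ⟨fun u v _ => ?_, fun u v huv => ?_⟩
  · obtain ⟨p⟩ := hG.preconnected u v
    refine ⟨p.toPath, p.toPath.2, List.Nodup.map hc ?_⟩
    exact ((List.dropLast_sublist _).trans (List.tail_sublist _)).nodup p.toPath.2.support_nodup
  · have h : distToColor G c u (c v) = 0 := (congrFun huv (c v)).trans distToColor_self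
    rcases (distToColor_eq_zero_iff hG).1 h with h | h
    exacts [hc h, absurd rfl (h v)]

section TwoColors

variable {c : V → Fin 2}

lemma rainbowCode_eq_of_distToColor_eq {j : Fin 2} (hc : c u = c w) (hj : c u ≠ j)
    (hd : distToColor G c u j = distToColor G c w j) : rainbowCode G c u = rainbowCode G c w := by
  funext i
  rcases (by omega : i = c u ∨ i = j) with rfl | rfl
  · show distToColor G c u (c u) = distToColor G c w (c u)
    rw [distToColor_self, hc, distToColor_self]
  · exact hd

lemma IsLocatingRainbowColoring.distToColor_ne {j : Fin 2} (hc : IsLocatingRainbowColoring G c)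
    (huw : u ≠ w) (hcol : c u = c w) (hj : c u ≠ j) :
    distToColor G c u j ≠ distToColor G c w j :=
  fun hd => huw (hc.2 (rainbowCode_eq_of_distToColor_eq hcol hj hd))

lemma IsLocatingRainbowColoring.distToColor_ne_two {j : Fin 2}
    (hc : IsLocatingRainbowColoring G c) (hG : G.Connected) (hj : c v ≠ j)
    (hv : (G.neighborSet v).Nontrivial) : distToColor G c v j ≠ 2 := by
  intro hd
  obtain ⟨x, hx, y, hy, hxy⟩ := hv
  obtain ⟨z, hz⟩ : ∃ z, c z = j := by
    by_contra! h
    have := (distToColor_eq_zero_iff hG (v := v)).2 (.inr h)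
    omega
  have hcol : ∀ w, G.Adj v w → c w = c v := fun w hw => by
    by_contra hne
    have := distToColor_le_one_of_adj hw (by omega : c w = j)
    omega
  have hbounds : ∀ w, c w = c v → 0 < distToColor G c w j ∧ distToColor G c w j ≤ 2 :=
    fun w hw => ⟨distToColor_pos hG (hw ▸ hj) hz, hc.1.distToColor_le hz⟩
  have hxv := hc.distToColor_ne (G.ne_of_adj hx).symm (hcol x hx) (hcol x hx ▸ hj)
  have hyv := hc.distToColor_ne (G.ne_of_adj hy).symm (hcol y hy) (hcol y hy ▸ hj)
  have hxy := hc.distToColor_ne hxy ((hcol x hx).trans (hcol y hy).symm) (hcol x hx ▸ hj)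
  have := hbounds x (hcol x hx)
  have := hbounds y (hcol y hy)
  omega

theorem IsLocatingRainbowColoring.isAcyclic (hc : IsLocatingRainbowColoring G c)
    (hG : G.Connected) : G.IsAcyclic := by
  intro u p hp
  obtain ⟨x, hx, y, hy, hxy⟩ := (hp.neighborSet_toSubgraph_endpoint ▸
    Set.nontrivial_pair hp.snd_ne_penultimate : (p.toSubgraph.neighborSet u).Nontrivial)
  have hsupport : ∀ w ∈ p.toSubgraph.neighborSet u, w ∈ p.support := fun w hw =>
    p.mem_verts_toSubgraph.1 (p.toSubgraph.neighborSet_subset_verts u hw)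
  obtain ⟨a, b, hab, ha, hb, hcol⟩ :
      ∃ a b, a ≠ b ∧ a ∈ p.support ∧ b ∈ p.support ∧ c a = c b := by
    by_cases hux : c u = c x
    · exact ⟨u, x, G.ne_of_adj hx.adj_sub, p.start_mem_support, hsupport x hx, hux⟩
    by_cases huy : c u = c y
    · exact ⟨u, y, G.ne_of_adj hy.adj_sub, p.start_mem_support, hsupport y hy, huy⟩
    exact ⟨x, y, hxy, hsupport x hx, hsupport y hy, by omega⟩
  obtain ⟨j, hj⟩ : ∃ j, c a ≠ j := ⟨c a + 1, by omega⟩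
  have hne := hc.distToColor_ne hab hcol hj
  have ha2 := hc.distToColor_ne_two hG hj (hp.neighborSet_nontrivial ha)
  have hb2 := hc.distToColor_ne_two hG (hcol ▸ hj) (hp.neighborSet_nontrivial hb)
  by_cases hz : ∀ z, c z ≠ j
  · exact hne (((distToColor_eq_zero_iff hG).2 (.inr hz)).trans
      ((distToColor_eq_zero_iff hG).2 (.inr hz)).symm)
  push Not at hz
  obtain ⟨z, hz⟩ := hz
  have := distToColor_pos hG hj hz
  have := distToColor_pos hG (hcol ▸ hj) hz
  have := hc.1.distToColor_le hz (v := a)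
  have := hc.1.distToColor_le hz (v := b)
  omega

end TwoColors

end LocatingRainbow

open LocatingRainbow in
theorem three_le_rvcl_of_cycle_general {V : Type*} [Fintype V] (G : SimpleGraph V)
    (hG : G.Connected) (hcyc : ¬ G.IsAcyclic) :
    3 ≤ rvcl G := by
  have hne : {k | ∃ c : V → Fin k, IsLocatingRainbowColoring G c}.Nonempty :=
    ⟨_, _, isLocatingRainbowColoring_of_injective hG (Fintype.equivFin V).injective⟩
  obtain ⟨c, hc⟩ := Nat.sInf_mem hne
  by_contra! h
  exact hcyc ((hc.comp_injective (Fin.castLE_injective (by omega : rvcl G ≤ 2))).isAcyclic hG)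

open LocatingRainbow in
/-- If `G` is a finite simple connected graph of order `n ≥ 3` containing a cycle,
then `rvcl(G) ≥ 3`. -/
theorem three_le_rvcl_of_cycle {V : Type*} [Fintype V] (G : SimpleGraph V)
    (hG : G.Connected) (hn : 3 ≤ Fintype.card V) (hcyc : ¬ G.IsAcyclic) :
    3 ≤ rvcl G :=
  three_le_rvcl_of_cycle_general G hG hcyc
end

section
/- The cycle graph C_9 on 9 vertices satisfies rvcl(C_9) = 4. -/
namespace SimpleGraph

variable {V W : Type*} {G : SimpleGraph V}

theorem Walk.dist_add_dist_le_length {u v x : V} (p : G.Walk u v) (hx : x ∈ p.support) :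
    G.dist u x + G.dist x v ≤ p.length := by
  obtain ⟨q, r, rfl⟩ := Walk.mem_support_iff_exists_append.mp hx
  rw [Walk.length_append]
  exact add_le_add (dist_le q) (dist_le r)

theorem Iso.dist_eq {G' : SimpleGraph W} (φ : G ≃g G') (u v : V) :
    G'.dist (φ u) (φ v) = G.dist u v := by
  by_cases h : G.Reachable u v
  · apply le_antisymm
    · obtain ⟨p, hp⟩ := h.exists_walk_length_eq_dist
      simpa [hp] using dist_le (p.map φ.toHom)
    · obtain ⟨p, hp⟩ := ((Iso.reachable_iff (φ := φ)).mpr h).exists_walk_length_eq_dist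
      simpa [hp] using dist_le (p.map φ.symm.toHom)
  · rw [dist_eq_zero_of_not_reachable h, dist_eq_zero_of_not_reachable (mt Iso.reachable_iff.mp h)]

theorem dist_eq_of_forall_adj {f : V → V → ℕ} (hzero : ∀ u v, f u v = 0 ↔ u = v)
    (hadj : ∀ u w v, G.Adj u w → f u v ≤ f w v + 1)
    (hdesc : ∀ u v, u ≠ v → ∃ w, G.Adj u w ∧ f w v + 1 = f u v) (u v : V) :
    G.dist u v = f u v := by
  have hle : ∀ {u : V} (p : G.Walk u v), f u v ≤ p.length := by
    intro u p
    induction p with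
    | nil => simp [hzero]
    | cons h p ih => simpa using (hadj _ _ _ h).trans (Nat.add_le_add_right ih 1)
  have hex : ∀ n u, f u v = n → ∃ p : G.Walk u v, p.length = n := by
    intro n
    induction n with
    | zero =>
      intro u hu
      obtain rfl := (hzero u v).mp hu
      exact ⟨.nil, rfl⟩
    | succ n ih =>
      intro u hu
      obtain ⟨w, hw, hfw⟩ := hdesc u v (fun h => by simp [(hzero u v).mpr h] at hu)
      obtain ⟨p, hp⟩ := ih w (by omega)
      exact ⟨p.cons hw, by simp [hp]⟩
  obtain ⟨p, hp⟩ := hex _ u rfl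
  obtain ⟨q, hq⟩ := p.reachable.exists_walk_length_eq_dist
  exact le_antisymm (hp ▸ dist_le p) (hq ▸ hle q)

def cycleGraph.rotate {n : ℕ} [NeZero n] (a : Fin n) : cycleGraph n ≃g cycleGraph n where
  toEquiv := Equiv.addRight a
  map_rel_iff' := by simp [cycleGraph_adj']

end SimpleGraph

namespace LocatingRainbow

open SimpleGraph Finset

variable {V : Type*} {G : SimpleGraph V} {k : ℕ}

theorem length_internalVertices {u v : V} (p : G.Walk u v) :
    (internalVertices p).length = p.length - 1 := by
  simp [internalVertices]

theorem nodup_internalVertices {u v : V} {p : G.Walk u v} (hp : p.IsPath) :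
    (internalVertices p).Nodup :=
  hp.support_nodup.sublist ((List.dropLast_sublist _).trans (List.tail_sublist _))

theorem mem_internalVertices {u v x : V} {p : G.Walk u v} (hp : p.IsPath)
    (hx : x ∈ internalVertices p) : x ∈ p.support ∧ x ≠ u ∧ x ≠ v := by
  have hnd := hp.support_nodup
  rw [internalVertices] at hx
  have hxt : x ∈ p.support.tail := List.mem_of_mem_dropLast hx
  rw [← List.tail_dropLast] at hx
  have hxd : x ∈ p.support.dropLast := List.mem_of_mem_tail hx
  refine ⟨List.mem_of_mem_tail hxt, ?_, ?_⟩
  · rintro rfl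
    rw [← p.cons_tail_support] at hnd
    exact (List.nodup_cons.mp hnd).1 hxt
  · rintro rfl
    rw [← List.dropLast_append_getLast p.support_ne_nil, p.getLast_support] at hnd
    exact List.disjoint_of_nodup_append hnd hxd (List.mem_singleton_self _)

theorem distToColor_apply_iso (φ : G ≃g G) {c : V → Fin k} (hc : ∀ x, c (φ x) = c x) (v : V)
    (i : Fin k) : distToColor G c (φ v) i = distToColor G c v i := by
  unfold distToColor
  congr 1
  ext m
  constructor
  · rintro ⟨y, hy, rfl⟩
    refine ⟨φ.symm y, by rw [← hc, φ.apply_symm_apply, hy], ?_⟩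
    rw [← Iso.dist_eq φ, φ.apply_symm_apply]
  · rintro ⟨y, hy, rfl⟩
    exact ⟨φ y, (hc y).trans hy, Iso.dist_eq φ v y⟩

theorem distToColor_eq [Fintype V] (c : V → Fin k) (v : V) (i : Fin k) :
    distToColor G c v i = if h : (univ.filter (c · = i)).Nonempty
      then (univ.filter (c · = i)).inf' h (G.dist v) else 0 := by
  split_ifs with h
  · refine IsLeast.csInf_eq ⟨?_, ?_⟩
    · obtain ⟨y, hy, hmin⟩ := exists_mem_eq_inf' h (G.dist v)
      exact ⟨y, (mem_filter.mp hy).2, hmin.symm⟩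
    · rintro m ⟨y, hy, rfl⟩
      exact inf'_le _ (mem_filter.mpr ⟨mem_univ y, hy⟩)
  · have hempty : {m | ∃ y, c y = i ∧ G.dist v y = m} = ∅ :=
      Set.eq_empty_of_forall_notMem fun m ⟨y, hy, _⟩ ↦ h ⟨y, mem_filter.mpr ⟨mem_univ y, hy⟩⟩
    rw [distToColor, hempty, Nat.sInf_empty]

theorem rainbowCode_apply_iso (φ : G ≃g G) {c : V → Fin k} (hc : ∀ x, c (φ x) = c x) (v : V) :
    rainbowCode G c (φ v) = rainbowCode G c v :=
  funext (distToColor_apply_iso φ hc v)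

def cycleDist {n : ℕ} (u v : Fin n) : ℕ := min (v - u).val (u - v).val

theorem dist_cycleGraph_nine (u v : Fin 9) : (cycleGraph 9).dist u v = cycleDist u v :=
  dist_eq_of_forall_adj (by decide) (by decide) (by decide) u v

theorem cycleDist_add_cycleDist_le_length {u v x : Fin 9} {p : (cycleGraph 9).Walk u v}
    (hp : p.IsPath) (hx : x ∈ internalVertices p) :
    x ≠ u ∧ x ≠ v ∧ cycleDist u x + cycleDist x v ≤ p.length := by
  obtain ⟨hxp, hxu, hxv⟩ := mem_internalVertices hp hx
  have h := p.dist_add_dist_le_length hxp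
  rw [dist_cycleGraph_nine, dist_cycleGraph_nine] at h
  exact ⟨hxu, hxv, h⟩

theorem nodup_three_consecutive_of_isRainbowVertexColoring (hk : k ≤ 3)
    {c : Fin 9 → Fin k} (hc : IsRainbowVertexColoring (cycleGraph 9) c) (u : Fin 9) :
    [c (u + 1), c (u + 2), c (u + 3)].Nodup := by
  obtain ⟨p, hp, hrb⟩ := hc u (u + 4) (by revert u; decide)
  have hshort : (internalVertices p).length ≤ 3 := by
    simpa using hrb.length_le_card.trans ((Fintype.card_fin k).trans_le hk)
  have hlong : 4 ≤ p.length := by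
    have h := dist_le p
    have h4 : ∀ u : Fin 9, cycleDist u (u + 4) = 4 := by decide
    rwa [dist_cycleGraph_nine, h4] at h
  have hsub : internalVertices p ⊆ [u + 1, u + 2, u + 3] := by
    intro x hx
    obtain ⟨hxu, hxv, h⟩ := cycleDist_add_cycleDist_le_length hp hx
    have hint : ∀ u x : Fin 9, x ≠ u → x ≠ u + 4 → cycleDist u x + cycleDist x (u + 4) ≤ 4 →
        x ∈ [u + 1, u + 2, u + 3] := by decide
    exact hint u x hxu hxv (by rw [length_internalVertices] at hshort; omega)
  have hperm := ((nodup_internalVertices hp).subperm hsub).perm_of_length_le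
    (by rw [length_internalVertices]; simp; omega)
  exact (hperm.map c).nodup_iff.mp hrb

open Fin.CommRing in
theorem apply_add_three_of_isRainbowVertexColoring (hk : k ≤ 3)
    {c : Fin 9 → Fin k} (hc : IsRainbowVertexColoring (cycleGraph 9) c) (u : Fin 9) :
    c (u + 3) = c u := by
  have h₁ := nodup_three_consecutive_of_isRainbowVertexColoring hk hc (u - 1)
  have h₂ := nodup_three_consecutive_of_isRainbowVertexColoring hk hc u
  rw [sub_add_cancel, show u - 1 + 2 = u + 1 by ring, show u - 1 + 3 = u + 2 by ring] at h₁
  by_contra hne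
  have h : [c u, c (u + 1), c (u + 2), c (u + 3)].Nodup := by
    simp only [List.nodup_cons, List.mem_cons, List.not_mem_nil] at h₁ h₂ ⊢
    grind
  simpa using h.length_le_card.trans ((Fintype.card_fin k).trans_le hk)

theorem four_le_of_isLocatingRainbowColoring {c : Fin 9 → Fin k}
    (hc : IsLocatingRainbowColoring (cycleGraph 9) c) : 4 ≤ k := by
  by_contra! hk
  have hper := apply_add_three_of_isRainbowVertexColoring (Nat.le_of_lt_succ hk) hc.1
  have h := hc.2 (rainbowCode_apply_iso (cycleGraph.rotate 3) hper 0)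
  exact absurd h (by decide)

def cycleNineColoring : Fin 9 → Fin 4 := ![0, 1, 2, 0, 1, 3, 0, 2, 3]

theorem isRainbowVertexColoring_cycleNineColoring :
    IsRainbowVertexColoring (cycleGraph 9) cycleNineColoring := by
  intro u v _
  obtain ⟨p, hp, hlen⟩ := Connected.exists_path_of_dist (G := cycleGraph 9) cycleGraph_connected u v
  refine ⟨p, hp, (nodup_internalVertices hp).map_on ?_⟩
  -- Geodesics of `C₉` are unique, and the interior of each one is rainbow.
  have hgeo : ∀ u v x y : Fin 9, x ≠ u → x ≠ v → cycleDist u x + cycleDist x v ≤ cycleDist u v →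
      y ≠ u → y ≠ v → cycleDist u y + cycleDist y v ≤ cycleDist u v →
      cycleNineColoring x = cycleNineColoring y → x = y := by decide
  rw [dist_cycleGraph_nine] at hlen
  intro x hx y hy
  obtain ⟨hxu, hxv, hx⟩ := cycleDist_add_cycleDist_le_length hp hx
  obtain ⟨hyu, hyv, hy⟩ := cycleDist_add_cycleDist_le_length hp hy
  exact hgeo u v x y hxu hxv (hlen ▸ hx) hyu hyv (hlen ▸ hy)

theorem injective_rainbowCode_cycleNineColoring :
    Function.Injective (rainbowCode (cycleGraph 9) cycleNineColoring) := by
  unfold rainbowCode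
  simp only [distToColor_eq, dist_cycleGraph_nine]
  decide

end LocatingRainbow

open LocatingRainbow SimpleGraph in
/-- The cycle graph `C_9` satisfies `rvcl(C_9) = 4`. -/
theorem rvcl_cycleGraph_nine : rvcl (cycleGraph 9) = 4 := by
  have h4 : 4 ∈ {k | ∃ c : Fin 9 → Fin k, IsLocatingRainbowColoring (cycleGraph 9) c} :=
    ⟨cycleNineColoring, isRainbowVertexColoring_cycleNineColoring,
      injective_rainbowCode_cycleNineColoring⟩
  refine le_antisymm (Nat.sInf_le h4) (le_csInf ⟨4, h4⟩ ?_)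
  rintro k ⟨c, hc⟩
  exact four_le_of_isLocatingRainbowColoring hc
end

section
/- For every n ∈ {9, 11, 12, 13, 15}, the cycle graph C_n satisfies rvcl(C_n) = ⌈n/2⌉ − 1. -/
namespace SimpleGraph

variable {V W : Type*} {G : SimpleGraph V} {G' : SimpleGraph W}

theorem Iso.dist_map_le (φ : G ≃g G') (u v : V) : G'.dist (φ u) (φ v) ≤ G.dist u v := by
  by_cases h : G.Reachable u v
  · obtain ⟨p, hp⟩ := h.exists_walk_length_eq_dist
    exact hp ▸ (dist_le (p.map φ.toHom)).trans_eq (p.length_map _)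
  · rw [dist_eq_zero_of_not_reachable h, dist_eq_zero_of_not_reachable fun h' => h ?_]
    simpa using h'.map φ.symm.toHom

theorem Iso.dist_map (φ : G ≃g G') (u v : V) : G'.dist (φ u) (φ v) = G.dist u v :=
  le_antisymm (φ.dist_map_le u v) (by simpa using φ.symm.dist_map_le (φ u) (φ v))

section cycleGraph

open scoped Fin.NatCast Fin.CommRing

variable {n : ℕ}

theorem cycleGraph_adj_add_one (u : Fin (n + 2)) : (cycleGraph (n + 2)).Adj u (u + 1) :=
  cycleGraph_adj.2 (Or.inr (add_sub_cancel_left u 1))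

def cycleGraphRotation (t : Fin (n + 2)) : cycleGraph (n + 2) ≃g cycleGraph (n + 2) where
  toEquiv := Equiv.addRight t
  map_rel_iff' := by simp [cycleGraph_adj]

@[simp]
theorem cycleGraphRotation_apply (t v : Fin (n + 2)) : cycleGraphRotation t v = v + t := rfl

def cycleGraph.forwardWalk (u : Fin (n + 2)) : (d : ℕ) → (cycleGraph (n + 2)).Walk u (u + d)
  | 0 => Walk.nil.copy rfl (by simp)
  | d + 1 => (Walk.cons (cycleGraph_adj_add_one u) (forwardWalk (u + 1) d)).copy rfl
      (by push_cast; ring)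

namespace cycleGraph

@[simp]
theorem length_forwardWalk (u : Fin (n + 2)) (d : ℕ) : (forwardWalk u d).length = d := by
  induction d generalizing u with
  | zero => simp [forwardWalk]
  | succ d ih => simp [forwardWalk, ih]

theorem getVert_forwardWalk (u : Fin (n + 2)) {d i : ℕ} (hi : i ≤ d) :
    (forwardWalk u d).getVert i = u + i := by
  induction d generalizing u i with
  | zero => simp [forwardWalk, Nat.le_zero.1 hi]
  | succ d ih =>
    cases i with
    | zero => simp
    | succ i =>
      simp only [forwardWalk, Walk.getVert_copy, Walk.getVert_cons_succ,
        ih (u + 1) (i := i) (by omega)]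
      push_cast
      ring

theorem isPath_forwardWalk (u : Fin (n + 2)) {d : ℕ} (hd : d < n + 2) :
    (forwardWalk u d).IsPath := by
  rw [← Walk.IsPath.getVert_injOn_iff]
  intro i hi j hj h
  simp only [length_forwardWalk, Set.mem_ofPred_eq] at hi hj
  rw [getVert_forwardWalk u hi, getVert_forwardWalk u hj, add_right_inj] at h
  simpa [Fin.ext_iff, Nat.mod_eq_of_lt (hi.trans_lt hd), Nat.mod_eq_of_lt (hj.trans_lt hd)] using h

end cycleGraph

theorem Walk.IsPath.getVert_eq_add_or_sub {u v : Fin (n + 2)}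
    {p : (cycleGraph (n + 2)).Walk u v} (hp : p.IsPath) :
    (∀ i ≤ p.length, p.getVert i = u + i) ∨ (∀ i ≤ p.length, p.getVert i = u - i) := by
  induction p with
  | nil => simp
  | @cons a b w h q ih =>
    obtain ⟨hq, ha⟩ := Walk.cons_isPath_iff h q |>.1 hp
    have hb : b = a + 1 ∨ b = a - 1 := by
      rcases cycleGraph_adj.1 h with h | h
      · right; linear_combination -h
      · left; linear_combination h
    rcases ih hq with hq' | hq' <;> rcases hb with rfl | rfl
    · left
      rintro (_ | i) hi
      · simp
      · rw [Walk.getVert_cons_succ, hq' i (by simp at hi; omega)]; push_cast; ring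
    -- In the two mixed cases `q` turns back, so its second vertex would be `a` again.
    · right
      have hq0 : q.length = 0 := by_contra fun hq0 =>
        ha (by simpa [hq' 1 (by omega)] using q.getVert_mem_support 1)
      rintro (_ | _ | i) hi <;> simp at hi ⊢; omega
    · left
      have hq0 : q.length = 0 := by_contra fun hq0 =>
        ha (by simpa [hq' 1 (by omega)] using q.getVert_mem_support 1)
      rintro (_ | _ | i) hi <;> simp at hi ⊢; omega
    · right
      rintro (_ | i) hi
      · simp
      · rw [Walk.getVert_cons_succ, hq' i (by simp at hi; omega)]; push_cast; ring

theorem Walk.IsPath.getVert_eq_add_or_reverse {u v : Fin (n + 2)}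
    {p : (cycleGraph (n + 2)).Walk u v} (hp : p.IsPath) :
    (∀ i ≤ p.length, p.getVert i = u + i) ∨
      (∀ i ≤ p.reverse.length, p.reverse.getVert i = v + i) := by
  refine hp.getVert_eq_add_or_sub.imp_right fun h i hi => ?_
  rw [Walk.length_reverse] at hi
  have hv : v = u - p.length := p.getVert_length.symm.trans (h _ le_rfl)
  rw [Walk.getVert_reverse, h _ (Nat.sub_le _ _), Nat.cast_sub hi]
  linear_combination -hv

theorem Walk.IsPath.val_sub_eq_length {u v : Fin (n + 2)} {p : (cycleGraph (n + 2)).Walk u v}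
    (hp : p.IsPath) (h : ∀ i ≤ p.length, p.getVert i = u + i) : (v - u).val = p.length := by
  have hv : v = u + p.length := p.getVert_length.symm.trans (h _ le_rfl)
  refine (congrArg (fun x => (x - u).val) hv).trans ?_
  rw [add_sub_cancel_left, Fin.val_natCast, Nat.mod_eq_of_lt (by simpa using hp.length_lt)]

theorem dist_cycleGraph (u v : Fin (n + 2)) :
    (cycleGraph (n + 2)).dist u v = min (v - u).val (u - v).val := by
  have hle (u v : Fin (n + 2)) : (cycleGraph (n + 2)).dist u v ≤ (v - u).val := by
    simpa using dist_le (cycleGraph.forwardWalk u (v - u).val)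
  refine le_antisymm (le_min (hle u v) (dist_comm.trans_le (hle v u))) ?_
  obtain ⟨p, hp, hlen⟩ := cycleGraph_connected.exists_path_of_dist u v
  rw [← hlen]
  rcases hp.getVert_eq_add_or_reverse with h | h
  · rw [← hp.val_sub_eq_length h]
    exact min_le_left _ _
  · rw [← p.length_reverse, ← hp.reverse.val_sub_eq_length h]
    exact min_le_right _ _

end cycleGraph

end SimpleGraph

namespace LocatingRainbow

open SimpleGraph

section General

variable {V : Type*} {G : SimpleGraph V}

theorem internalVertices_eq_map_getVert {u v : V} (p : G.Walk u v) :
    internalVertices p = (List.range (p.length - 1)).map fun i => p.getVert (i + 1) := by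
  apply List.ext_getElem
  · simp [internalVertices]
  · intro i _ h
    simp [internalVertices, Walk.support_getElem_eq_getVert]

@[simp]
theorem internalVertices_copy {u v u' v' : V} (p : G.Walk u v) (hu : u = u') (hv : v = v') :
    internalVertices (p.copy hu hv) = internalVertices p := by
  subst hu hv
  rfl

theorem internalVertices_reverse {u v : V} (p : G.Walk u v) :
    internalVertices p.reverse = (internalVertices p).reverse := by
  simp only [internalVertices, Walk.support_reverse, List.tail_reverse, List.dropLast_reverse]
  congr 1
  apply List.ext_getElem <;> simp

theorem nodup_map_internalVertices_reverse {α : Type*} {u v : V} (p : G.Walk u v) (c : V → α) :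
    ((internalVertices p.reverse).map c).Nodup ↔ ((internalVertices p).map c).Nodup := by
  rw [internalVertices_reverse, List.map_reverse, List.nodup_reverse]

theorem distToColor_eq_untopD [Fintype V] (G : SimpleGraph V) {k : ℕ} (c : V → Fin k) (v : V)
    (i : Fin k) :
    distToColor G c v i = (({y | c y = i} : Finset V).image (G.dist v)).min.untopD 0 := by
  have hset : {m | ∃ y, c y = i ∧ G.dist v y = m} =
      ↑(({y | c y = i} : Finset V).image (G.dist v)) := by
    ext; simp
  rw [distToColor, hset]
  rcases Finset.eq_empty_or_nonempty (({y | c y = i} : Finset V).image (G.dist v)) with h | h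
  · simp [h]
  · rw [h.csInf_eq_min', ← Finset.coe_min' h, WithTop.untopD_coe]

theorem rainbowCode_iso_apply {k : ℕ} {c : V → Fin k} (φ : G ≃g G) (hφ : ∀ v, c (φ v) = c v)
    (v : V) : rainbowCode G c (φ v) = rainbowCode G c v := by
  funext i
  simp only [rainbowCode, distToColor]
  congr 1
  ext m
  constructor
  · rintro ⟨y, rfl, rfl⟩
    exact ⟨φ.symm y, by simpa using (hφ (φ.symm y)).symm,
      by simpa using (φ.dist_map v (φ.symm y)).symm⟩
  · rintro ⟨y, rfl, rfl⟩
    exact ⟨φ y, hφ y, φ.dist_map v y⟩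

theorem rvcl_eq_of_forall_le {k : ℕ} (c : V → Fin k) (hc : IsLocatingRainbowColoring G c)
    (h : ∀ (j : ℕ) (c' : V → Fin j), IsLocatingRainbowColoring G c' → k ≤ j) : rvcl G = k :=
  le_antisymm (Nat.sInf_le ⟨c, hc⟩) (le_csInf ⟨k, c, hc⟩ fun j ⟨c', hc'⟩ => h j c' hc')

end General

theorem periodic_of_injective_window {G α : Type*} [AddCommMonoidWithOne G] [Fintype α] {k : ℕ}
    (hα : Fintype.card α ≤ k) {c : G → α}
    (hc : ∀ u, Function.Injective fun i : Fin k => c (u + i)) : Function.Periodic c k := by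
  intro v
  have hbij (u : G) : Function.Bijective fun i : Fin k => c (u + i) :=
    (Fintype.bijective_iff_injective_and_card _).2
      ⟨hc u, le_antisymm (Fintype.card_le_of_injective _ (hc u)) (by simpa using hα)⟩
  obtain ⟨⟨_ | i, hik⟩, hi⟩ := (hbij v).2 (c (v + k))
  · simpa using hi.symm
  · -- otherwise positions `i` and `k - 1` of the window starting at `v + 1` share a color
    have h := @hc (v + 1) ⟨i, by omega⟩ ⟨k - 1, by omega⟩ <| by
      simp only [← hi, add_assoc, ← Nat.cast_one (R := G), ← Nat.cast_add, add_comm 1,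
        Nat.sub_add_cancel (by omega : 1 ≤ k)]
    simp [Fin.ext_iff] at h
    omega

section Cycle

open scoped Fin.NatCast Fin.CommRing

variable {n : ℕ}

def arcInterior (u : Fin (n + 2)) (d : ℕ) : List (Fin (n + 2)) :=
  (List.range (d - 1)).map fun i => u + (i + 1 : ℕ)

theorem internalVertices_eq_arcInterior {u v : Fin (n + 2)}
    (p : (cycleGraph (n + 2)).Walk u v) (hp : ∀ i ≤ p.length, p.getVert i = u + i) :
    internalVertices p = arcInterior u p.length := by
  rw [internalVertices_eq_map_getVert, arcInterior]
  exact List.map_congr_left fun i hi => hp _ (by simp at hi; omega)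

theorem internalVertices_forwardWalk (u : Fin (n + 2)) (d : ℕ) :
    internalVertices (cycleGraph.forwardWalk u d) = arcInterior u d := by
  rw [internalVertices_eq_arcInterior _ fun i hi =>
    cycleGraph.getVert_forwardWalk u (by simpa using hi), cycleGraph.length_forwardWalk]

theorem isRainbowVertexColoring_cycleGraph_iff {k : ℕ} (c : Fin (n + 2) → Fin k) :
    IsRainbowVertexColoring (cycleGraph (n + 2)) c ↔ ∀ u v : Fin (n + 2), u ≠ v →
      ((arcInterior u (v - u).val).map c).Nodup ∨ ((arcInterior v (u - v).val).map c).Nodup := by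
  refine ⟨fun hc u v huv => ?_, fun h u v huv => ?_⟩
  · obtain ⟨p, hp, hnd⟩ := hc u v huv
    rcases hp.getVert_eq_add_or_reverse with h | h
    · left
      rwa [hp.val_sub_eq_length h, ← internalVertices_eq_arcInterior p h]
    · right
      rwa [hp.reverse.val_sub_eq_length h, ← internalVertices_eq_arcInterior p.reverse h,
        nodup_map_internalVertices_reverse]
  · have arc (u v : Fin (n + 2)) (h : ((arcInterior u (v - u).val).map c).Nodup) :
        ∃ p : (cycleGraph (n + 2)).Walk u v, p.IsPath ∧ ((internalVertices p).map c).Nodup :=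
      ⟨(cycleGraph.forwardWalk u (v - u).val).copy rfl (by simp),
        by simpa using cycleGraph.isPath_forwardWalk u (Fin.isLt _),
        by simpa [internalVertices_forwardWalk] using h⟩
    rcases h u v huv with h | h
    · exact arc u v h
    · obtain ⟨p, hp, hnd⟩ := arc v u h
      exact ⟨p.reverse, hp.reverse, (nodup_map_internalVertices_reverse p c).2 hnd⟩

theorem rainbowCode_cycleGraph {k : ℕ} (c : Fin (n + 2) → Fin k) :
    rainbowCode (cycleGraph (n + 2)) c = fun v i =>
      (({y | c y = i} : Finset _).image fun y => min (y - v).val (v - y).val).min.untopD 0 := by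
  funext v i
  rw [rainbowCode, distToColor_eq_untopD, funext (dist_cycleGraph v)]

theorem isLocatingRainbowColoring_cycleGraph_iff {k : ℕ} (c : Fin (n + 2) → Fin k) :
    IsLocatingRainbowColoring (cycleGraph (n + 2)) c ↔
      (∀ u v : Fin (n + 2), u ≠ v →
        ((arcInterior u (v - u).val).map c).Nodup ∨ ((arcInterior v (u - v).val).map c).Nodup) ∧
      Function.Injective fun v i =>
        (({y | c y = i} : Finset _).image fun y => min (y - v).val (v - y).val).min.untopD 0 := by
  rw [IsLocatingRainbowColoring, isRainbowVertexColoring_cycleGraph_iff, rainbowCode_cycleGraph]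

theorem IsRainbowVertexColoring.nodup_arcInterior_or {k : ℕ} {c : Fin (n + 2) → Fin k}
    (hc : IsRainbowVertexColoring (cycleGraph (n + 2)) c) (u : Fin (n + 2)) {d : ℕ} (hd₀ : 0 < d)
    (hd : d < n + 2) :
    ((arcInterior u d).map c).Nodup ∨
      ((arcInterior (u + (d : Fin (n + 2))) (n + 2 - d)).map c).Nodup := by
  have hv : (u + d - u).val = d := by
    rw [add_sub_cancel_left, Fin.val_natCast, Nat.mod_eq_of_lt hd]
  have hu : (u - (u + d)).val = n + 2 - d := by
    have : u - (u + d) = ((n + 2 - d : ℕ) : Fin (n + 2)) := by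
      rw [Nat.cast_sub hd.le, Fin.natCast_self]; ring
    rw [this, Fin.val_natCast, Nat.mod_eq_of_lt (by omega)]
  have hne : u ≠ u + d := fun h => by rw [← h, sub_self, Fin.val_zero] at hv; omega
  simpa only [hv, hu] using (isRainbowVertexColoring_cycleGraph_iff c).1 hc u (u + d) hne

theorem IsRainbowVertexColoring.half_sub_one_le_of_cycleGraph {k : ℕ} {c : Fin (n + 2) → Fin k}
    (hc : IsRainbowVertexColoring (cycleGraph (n + 2)) c) : (n + 2) / 2 - 1 ≤ k := by
  rcases hc.nodup_arcInterior_or 0 (d := (n + 2) / 2) (by omega) (by omega) with h | h <;>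
  · have := h.length_le_card
    simp only [List.length_map, arcInterior, List.length_range, Fintype.card_fin] at this
    omega

theorem IsLocatingRainbowColoring.succ_le_of_cycleGraph_odd {m k : ℕ}
    {c : Fin (2 * m + 3) → Fin k} (hc : IsLocatingRainbowColoring (cycleGraph (2 * m + 3)) c) :
    m + 1 ≤ k := by
  by_contra! hk
  -- With at most `m` colors the long arc between `u - 1` and `u + m` repeats a color,
  -- so the short one, `u, …, u + m - 1`, is rainbow.
  have hwin (u : Fin (2 * m + 3)) : Function.Injective fun i : Fin m => c (u + i) := by
    rcases hc.1.nodup_arcInterior_or (u - 1) (d := m + 1) (by omega) (by omega) with h | h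
    · have e (i : ℕ) : u - 1 + ((i + 1 : ℕ) : Fin (2 * m + 3)) = u + i := by push_cast; ring
      simp only [arcInterior, Nat.add_sub_cancel, List.map_map, Function.comp_def, e,
        List.nodup_map_iff_inj_on List.nodup_range, List.mem_range] at h
      exact fun i j hij => Fin.ext (h i i.isLt j j.isLt hij)
    · have := h.length_le_card
      simp only [List.length_map, arcInterior, List.length_range, Fintype.card_fin] at this
      omega
  have hper := periodic_of_injective_window (by simpa using Nat.le_of_lt_succ hk) hwin
  have hm : 2 * m + 3 ∣ m := by
    simpa using hc.2 (rainbowCode_iso_apply (cycleGraphRotation (m : Fin (2 * m + 3))) hper 0)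
  obtain rfl : m = 0 := Nat.eq_zero_of_dvd_of_lt hm (by omega)
  obtain rfl : k = 0 := by omega
  exact (c 0).elim0

theorem IsLocatingRainbowColoring.le_of_cycleGraph {k : ℕ} {c : Fin (n + 2) → Fin k}
    (hc : IsLocatingRainbowColoring (cycleGraph (n + 2)) c) : (n + 2 + 1) / 2 - 1 ≤ k := by
  obtain ⟨m, rfl | rfl⟩ := Nat.even_or_odd' n
  · have := hc.1.half_sub_one_le_of_cycleGraph
    omega
  · have := hc.succ_le_of_cycleGraph_odd
    omega

theorem rvcl_cycleGraph_eq_of_isLocatingRainbowColoring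
    (c : Fin (n + 2) → Fin ((n + 2 + 1) / 2 - 1))
    (hc : IsLocatingRainbowColoring (cycleGraph (n + 2)) c) :
    rvcl (cycleGraph (n + 2)) = (n + 2 + 1) / 2 - 1 :=
  rvcl_eq_of_forall_le c hc fun _ _ hc' => hc'.le_of_cycleGraph

end Cycle

end LocatingRainbow

open LocatingRainbow SimpleGraph in
/-- For every `n ∈ {9, 11, 12, 13, 15}`, the cycle `C_n` satisfies
`rvcl(C_n) = ⌈n/2⌉ - 1`. -/
theorem rvcl_cycleGraph_middle (n : ℕ)
    (hn : n = 9 ∨ n = 11 ∨ n = 12 ∨ n = 13 ∨ n = 15) :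
    rvcl (cycleGraph n) = (n + 1) / 2 - 1 := by
  rcases hn with rfl | rfl | rfl | rfl | rfl
  · exact rvcl_cycleGraph_eq_of_isLocatingRainbowColoring ![3, 1, 2, 0, 3, 2, 3, 1, 0]
      ((isLocatingRainbowColoring_cycleGraph_iff _).2 (by decide))
  · exact rvcl_cycleGraph_eq_of_isLocatingRainbowColoring ![1, 0, 3, 2, 1, 0, 3, 4, 2, 0, 3]
      ((isLocatingRainbowColoring_cycleGraph_iff _).2 (by decide))
  · exact rvcl_cycleGraph_eq_of_isLocatingRainbowColoring ![2, 3, 1, 0, 2, 3, 4, 1, 2, 3, 0, 4]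
      ((isLocatingRainbowColoring_cycleGraph_iff _).2 (by decide))
  · exact rvcl_cycleGraph_eq_of_isLocatingRainbowColoring ![3, 4, 2, 5, 0, 1, 3, 5, 4, 2, 1, 5, 0]
      ((isLocatingRainbowColoring_cycleGraph_iff _).2 (by decide))
  · exact rvcl_cycleGraph_eq_of_isLocatingRainbowColoring
      ![5, 3, 0, 1, 6, 2, 4, 0, 5, 1, 3, 2, 0, 6, 4]
      ((isLocatingRainbowColoring_cycleGraph_iff _).2 (by decide))
end
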